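/- arXiv:2210.13100 — 6 statements merged into one kernel-verified Lean document; each statement's English description precedes it below -/
import Mathlib

section
/- In the partially ordered set (𝕋, ≤) of voting tables, every maximal chain has exactly 2n+1 elements, and the function ρ(x,y,z,t) = x − t is a rank function: if T < S then ρ(T) < ρ(S), and if S is an immediate successor of T (i.e., S covers T in the order) then ρ(S) = ρ(T) + 1. -/
/-!
An elementary step preserves the committee size and raises `ρ = x − t` by exactly one, so `ρ`
is strictly monotone and goes up by one along a cover. Among the tables of size `n`, `(0,0,0,n)`
is the least and `(n,0,0,0)` the greatest, of ranks `−n` and `n`; a maximal chain contains both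
and `ρ` is injective on it. It also misses no rank in between: the first step from an element of
the chain towards the next one is comparable with the whole chain, so by maximality it lies in
the chain. Hence the chain has `2n + 1` elements.
-/

/-- The sum of the four entries of a voting table. -/
def tsum4 (T : ℕ × ℕ × ℕ × ℕ) : ℕ := T.1 + T.2.1 + T.2.2.1 + T.2.2.2

/-- One elementary step of the order generated by the four relations
`(x,y,z,t) ≤ (x,y,z+1,t−1)`, `(x,y,z,t) ≤ (x,y+1,z,t−1)`,
`(x,y,z,t) ≤ (x+1,y−1,z,t)`, `(x,y,z,t) ≤ (x+1,y,z−1,t)`. -/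
def tableStep (T S : ℕ × ℕ × ℕ × ℕ) : Prop :=
  (∃ x y z t : ℕ, T = (x, y, z, t + 1) ∧ S = (x, y, z + 1, t)) ∨
  (∃ x y z t : ℕ, T = (x, y, z, t + 1) ∧ S = (x, y + 1, z, t)) ∨
  (∃ x y z t : ℕ, T = (x, y + 1, z, t) ∧ S = (x + 1, y, z, t)) ∨
  (∃ x y z t : ℕ, T = (x, y, z + 1, t) ∧ S = (x + 1, y, z, t))

/-- The partial order on voting tables generated by the four relations. -/
def tableLe : ℕ × ℕ × ℕ × ℕ → ℕ × ℕ × ℕ × ℕ → Prop :=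
  Relation.ReflTransGen tableStep

/-- The rank function ρ(x,y,z,t) = x − t. -/
def trho (T : ℕ × ℕ × ℕ × ℕ) : ℤ := (T.1 : ℤ) - (T.2.2.2 : ℤ)

lemma tsum4_eq_of_tableStep {T S : ℕ × ℕ × ℕ × ℕ} (h : tableStep T S) : tsum4 S = tsum4 T := by
  rcases h with ⟨x, y, z, t, rfl, rfl⟩ | ⟨x, y, z, t, rfl, rfl⟩ | ⟨x, y, z, t, rfl, rfl⟩ |
    ⟨x, y, z, t, rfl, rfl⟩ <;> simp only [tsum4] <;> omega

lemma trho_eq_of_tableStep {T S : ℕ × ℕ × ℕ × ℕ} (h : tableStep T S) : trho S = trho T + 1 := by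
  rcases h with ⟨x, y, z, t, rfl, rfl⟩ | ⟨x, y, z, t, rfl, rfl⟩ | ⟨x, y, z, t, rfl, rfl⟩ |
    ⟨x, y, z, t, rfl, rfl⟩ <;> simp only [trho] <;> omega

lemma tsum4_eq_of_tableLe {T S : ℕ × ℕ × ℕ × ℕ} (h : tableLe T S) : tsum4 S = tsum4 T := by
  induction h with
  | refl => rfl
  | tail _ hstep ih => rw [tsum4_eq_of_tableStep hstep, ih]

lemma trho_le_of_tableLe {T S : ℕ × ℕ × ℕ × ℕ} (h : tableLe T S) : trho T ≤ trho S := by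
  induction h with
  | refl => rfl
  | tail _ hstep ih => rw [trho_eq_of_tableStep hstep]; omega

lemma trho_lt_of_tableLe {T S : ℕ × ℕ × ℕ × ℕ} (h : tableLe T S) (hne : T ≠ S) :
    trho T < trho S := by
  obtain ⟨U, hTU, hUS⟩ := h.cases_head.resolve_left hne
  have := trho_le_of_tableLe hUS
  rw [trho_eq_of_tableStep hTU] at this
  omega

lemma trho_eq_add_one_of_cover {n : ℕ} {T S : ℕ × ℕ × ℕ × ℕ} (hT : tsum4 T = n)
    (hTS : tableLe T S) (hne : T ≠ S)
    (hcov : ∀ U, tsum4 U = n → tableLe T U → tableLe U S → U = T ∨ U = S) :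
    trho S = trho T + 1 := by
  obtain ⟨U, hTU, hUS⟩ := hTS.cases_head.resolve_left hne
  have hU := trho_eq_of_tableStep hTU
  rcases hcov U ((tsum4_eq_of_tableStep hTU).trans hT) (.single hTU) hUS with rfl | rfl
  · omega
  · exact hU

lemma tableLe_move_t_z {x y z t z' t' : ℕ} (hz : z ≤ z') (h : z' + t' = z + t) :
    tableLe (x, y, z, t) (x, y, z', t') := by
  induction z', hz using Nat.le_induction generalizing t' with
  | base =>
    obtain rfl : t' = t := by omega
    exact .refl
  | succ z' _ ih =>
    exact (ih (t' := t' + 1) (by omega)).tail (Or.inl ⟨x, y, z', t', rfl, rfl⟩)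

lemma tableLe_move_t_y {x y z t y' t' : ℕ} (hy : y ≤ y') (h : y' + t' = y + t) :
    tableLe (x, y, z, t) (x, y', z, t') := by
  induction y', hy using Nat.le_induction generalizing t' with
  | base =>
    obtain rfl : t' = t := by omega
    exact .refl
  | succ y' _ ih =>
    exact (ih (t' := t' + 1) (by omega)).tail (Or.inr (Or.inl ⟨x, y', z, t', rfl, rfl⟩))

lemma tableLe_move_y_x {x y z t x' y' : ℕ} (hx : x ≤ x') (h : x' + y' = x + y) :
    tableLe (x, y, z, t) (x', y', z, t) := by
  induction x', hx using Nat.le_induction generalizing y' with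
  | base =>
    obtain rfl : y' = y := by omega
    exact .refl
  | succ x' _ ih =>
    exact (ih (y' := y' + 1) (by omega)).tail (Or.inr (Or.inr (Or.inl ⟨x', y', z, t, rfl, rfl⟩)))

lemma tableLe_move_z_x {x y z t x' z' : ℕ} (hx : x ≤ x') (h : x' + z' = x + z) :
    tableLe (x, y, z, t) (x', y, z', t) := by
  induction x', hx using Nat.le_induction generalizing z' with
  | base =>
    obtain rfl : z' = z := by omega
    exact .refl
  | succ x' _ ih =>
    exact (ih (z' := z' + 1) (by omega)).tail (Or.inr (Or.inr (Or.inr ⟨x', y, z', t, rfl, rfl⟩)))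

instance : Trans tableLe tableLe tableLe := ⟨fun h h' => Relation.ReflTransGen.trans h h'⟩

lemma tableLe_bot : ∀ T : ℕ × ℕ × ℕ × ℕ, tableLe (0, 0, 0, tsum4 T) T
  | (x, y, z, t) => calc
      tableLe (0, 0, 0, x + y + z + t) (0, 0, x + z, y + t) :=
        tableLe_move_t_z (by omega) (by omega)
      tableLe _ (0, y, x + z, t) := tableLe_move_t_y (by omega) (by omega)
      tableLe _ (x, y, z, t) := tableLe_move_z_x (by omega) (by omega)

lemma tableLe_top : ∀ T : ℕ × ℕ × ℕ × ℕ, tableLe T (tsum4 T, 0, 0, 0)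
  | (x, y, z, t) => calc
      tableLe (x, y, z, t) (x, y + t, z, 0) := tableLe_move_t_y (by omega) (by omega)
      tableLe _ (x + y + t, 0, z, 0) := tableLe_move_y_x (by omega) (by omega)
      tableLe _ (x + y + z + t, 0, 0, 0) := tableLe_move_z_x (by omega) (by omega)

section GradedChain

variable {α : Type*} [PartialOrder α] {f : α → ℤ} {C : Set α}

lemma IsChain.injOn_of_strictMono (hf : StrictMono f) (hC : IsChain (· ≤ ·) C) :
    Set.InjOn f C := by
  intro a ha b hb hab
  by_contra hne
  rcases hC ha hb hne with h | h
  · exact (hf (h.lt_of_ne hne)).ne hab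
  · exact (hf (h.lt_of_ne (Ne.symm hne))).ne' hab

lemma IsMaxChain.add_one_mem_image
    (hsucc : ∀ a b, a < b → ∃ c, a ≤ c ∧ c ≤ b ∧ f c = f a + 1)
    (hC : IsMaxChain (· ≤ ·) C) (hfin : C.Finite) {a b : α} (ha : a ∈ C) (hb : b ∈ C)
    (hab : a < b) : f a + 1 ∈ f '' C := by
  obtain ⟨b₀, ⟨hb₀C, hab₀⟩, hb₀min⟩ :=
    (hfin.subset (Set.sep_subset C (a < ·))).exists_minimal ⟨b, hb, hab⟩
  obtain ⟨c, hac, hcb₀, hfc⟩ := hsucc a b₀ hab₀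
  have hcomp : ∀ d ∈ C, c ≠ d → c ≤ d ∨ d ≤ c := by
    intro d hd _
    rcases hC.isChain.total ha hd with had | hda
    · rcases had.eq_or_lt with rfl | had
      · exact Or.inr hac
      rcases hC.isChain.total hd hb₀C with hdb₀ | hb₀d
      · exact Or.inl (hcb₀.trans (hb₀min ⟨hd, had⟩ hdb₀))
      · exact Or.inl (hcb₀.trans hb₀d)
    · exact Or.inr (hda.trans hac)
  have hcC : c ∈ C := hC.2 (hC.isChain.insert hcomp) (Set.subset_insert c C) ▸ Set.mem_insert c C
  exact ⟨c, hcC, hfc⟩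

variable [BoundedOrder α]

lemma IsMaxChain.image_eq_Icc (hf : StrictMono f)
    (hsucc : ∀ a b, a < b → ∃ c, a ≤ c ∧ c ≤ b ∧ f c = f a + 1)
    (hC : IsMaxChain (· ≤ ·) C) : f '' C = Set.Icc (f ⊥) (f ⊤) := by
  have hsub : f '' C ⊆ Set.Icc (f ⊥) (f ⊤) :=
    Set.image_subset_iff.2 fun a _ => ⟨hf.monotone bot_le, hf.monotone le_top⟩
  have hfin : C.Finite :=
    ((Set.finite_Icc _ _).subset hsub).of_finite_image (hC.isChain.injOn_of_strictMono hf)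
  refine hsub.antisymm ?_
  rintro k ⟨hk₀, hk₁⟩
  induction k, hk₀ using Int.leInduction with
  | base => exact ⟨⊥, hC.bot_mem, rfl⟩
  | succ k _ ih =>
    obtain ⟨a, ha, rfl⟩ := ih (by omega)
    have hat : a < ⊤ := le_top.lt_of_ne fun h => by subst h; omega
    exact hC.add_one_mem_image hsucc hfin ha hC.top_mem hat

lemma IsMaxChain.ncard_eq (hf : StrictMono f)
    (hsucc : ∀ a b, a < b → ∃ c, a ≤ c ∧ c ≤ b ∧ f c = f a + 1)
    (hC : IsMaxChain (· ≤ ·) C) : C.ncard = (f ⊤ + 1 - f ⊥).toNat := by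
  rw [← (hC.isChain.injOn_of_strictMono hf).ncard_image, hC.image_eq_Icc hf hsucc,
    ← Finset.coe_Icc, Set.ncard_coe_finset, Int.card_Icc]

end GradedChain

def VotingTable (n : ℕ) : Type := {T : ℕ × ℕ × ℕ × ℕ // tsum4 T = n}

namespace VotingTable

variable {n : ℕ}

instance : PartialOrder (VotingTable n) where
  le T S := tableLe T.1 S.1
  le_refl _ := .refl
  le_trans _ _ _ := .trans
  le_antisymm T S hTS hST := Subtype.ext <| by_contra fun hne =>
    (trho_lt_of_tableLe hTS hne).not_ge (trho_le_of_tableLe hST)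

instance : BoundedOrder (VotingTable n) where
  bot := ⟨(0, 0, 0, n), by simp [tsum4]⟩
  bot_le T := T.2 ▸ tableLe_bot T.1
  top := ⟨(n, 0, 0, 0), by simp [tsum4]⟩
  le_top T := T.2 ▸ tableLe_top T.1

lemma strictMono_trho : StrictMono fun T : VotingTable n => trho T.1 :=
  fun _ _ h => trho_lt_of_tableLe h.le fun he => h.ne (Subtype.ext he)

lemma exists_le_le_trho_eq_add_one {T S : VotingTable n} (h : T < S) :
    ∃ U : VotingTable n, T ≤ U ∧ U ≤ S ∧ trho U.1 = trho T.1 + 1 := by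
  obtain ⟨U, hTU, hUS⟩ :=
    Relation.ReflTransGen.cases_head (show tableLe T.1 S.1 from h.le) |>.resolve_left
      fun he => h.ne (Subtype.ext he)
  exact ⟨⟨U, (tsum4_eq_of_tableStep hTU).trans T.2⟩, .single hTU, hUS, trho_eq_of_tableStep hTU⟩

lemma ncard_of_isMaxChain {C : Set (VotingTable n)} (hC : IsMaxChain (· ≤ ·) C) :
    C.ncard = 2 * n + 1 := by
  rw [hC.ncard_eq strictMono_trho fun _ _ => exists_le_le_trho_eq_add_one]
  change ((n : ℤ) - 0 + 1 - (0 - n)).toNat = 2 * n + 1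
  omega

end VotingTable

theorem maximal_chains_and_rank_general (n : ℕ) :
    (∀ C : Set {T : ℕ × ℕ × ℕ × ℕ // tsum4 T = n},
      IsMaxChain (fun T S => tableLe T.1 S.1) C → C.ncard = 2 * n + 1) ∧
    (∀ T S : ℕ × ℕ × ℕ × ℕ, tsum4 T = n → tsum4 S = n →
      tableLe T S → T ≠ S → trho T < trho S) ∧
    (∀ T S : ℕ × ℕ × ℕ × ℕ, tsum4 T = n → tsum4 S = n →
      tableLe T S → T ≠ S →
      (∀ U : ℕ × ℕ × ℕ × ℕ, tsum4 U = n → tableLe T U → tableLe U S → U = T ∨ U = S) →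
      trho S = trho T + 1) :=
  ⟨fun _ => VotingTable.ncard_of_isMaxChain (n := n), fun _ _ _ _ => trho_lt_of_tableLe,
    fun _ _ hT _ => trho_eq_add_one_of_cover hT⟩

/-- In the poset (𝕋, ≤) of voting tables of a committee of odd size `n = 2m+1`,
every maximal chain has exactly `2n+1` elements, and `ρ(x,y,z,t) = x − t` is a rank
function: `T < S` implies `ρ(T) < ρ(S)`, and if `S` is an immediate successor of `T`
then `ρ(S) = ρ(T) + 1`. -/
theorem maximal_chains_and_rank (n m : ℕ) (hm : 1 ≤ m) (hn : n = 2 * m + 1) :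
    (∀ C : Set {T : ℕ × ℕ × ℕ × ℕ // tsum4 T = n},
      IsMaxChain (fun T S => tableLe T.1 S.1) C → C.ncard = 2 * n + 1) ∧
    (∀ T S : ℕ × ℕ × ℕ × ℕ, tsum4 T = n → tsum4 S = n →
      tableLe T S → T ≠ S → trho T < trho S) ∧
    (∀ T S : ℕ × ℕ × ℕ × ℕ, tsum4 T = n → tsum4 S = n →
      tableLe T S → T ≠ S →
      (∀ U : ℕ × ℕ × ℕ × ℕ, tsum4 U = n → tableLe T U → tableLe U S → U = T ∨ U = S) →
      trho S = trho T + 1) :=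
  maximal_chains_and_rank_general n
end

section
/- Let r be an admissible decision rule and let 1/2 < θ < 1. Then Σ_{T=(x,y,z,t): r(T)=1} (n!/(x!·y!·z!·t!)) θ^{x+2y+t}(1−θ)^{x+2z+t} = Σ_{T=(x,y,z,t): r(T)=1} (n!/(x!·y!·z!·t!)) θ^{x+2z+t}(1−θ)^{x+2y+t}, and moreover Σ_{T=(x,y,z,t): r(T)=1} (n!/(x!·y!·z!·t!)) θ^{x+2y+t}(1−θ)^{x+2z+t} ≥ Σ_{T=(x,y,z,t): r(T)=1} (n!/(x!·y!·z!·t!)) θ^{y+z+2t}(1−θ)^{2x+y+z}. -/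
/-- The finite set of all voting tables of a committee of size `n`. -/
def tables (n : ℕ) : Finset (ℕ × ℕ × ℕ × ℕ) :=
  ((Finset.range (n+1)) ×ˢ (Finset.range (n+1)) ×ˢ (Finset.range (n+1)) ×ˢ
    (Finset.range (n+1))).filter (fun T => tsum4 T = n)

/-- Multinomial coefficient `n!/(x! y! z! t!)` as a real number. -/
noncomputable def mcoef (n : ℕ) (T : ℕ × ℕ × ℕ × ℕ) : ℝ :=
  (n.factorial : ℝ) /
    (T.1.factorial * T.2.1.factorial * T.2.2.1.factorial * T.2.2.2.factorial)

/-! Swapping the counts `y` and `z` is an involution of the tables that fixes an admissible rule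
and the multinomial coefficient and exchanges the weights of the states `P∧¬Q` and `¬P∧Q`.

For the inequality, `x, y, z, t` count the voters voting `(P, Q)`, `(P, ¬Q)`, `(¬P, Q)`,
`(¬P, ¬Q)`. Under both `P∧¬Q` and `¬P∧¬Q` a voter's two votes are independent and the vote on
`Q` has the same law; only the probability of a vote for `P` changes, from `θ` to `1 - θ ≤ θ`.
An admissible rule increases under the moves `t → y` and `z → x`, which turn one vote into a
vote for `P`, and the expectation of any such function increases with the probability of a vote
for `P`: by induction on the number of voters, peeling off one voter with the Pascal recursion
of the multinomial coefficients.
-/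

open Finset

local notation "Table" => ℕ × ℕ × ℕ × ℕ

lemma mem_tables {k : ℕ} {T : Table} : T ∈ tables k ↔ tsum4 T = k := by
  obtain ⟨x, y, z, t⟩ := T
  rw [tables, mem_filter]
  simp only [tsum4, mem_product, mem_range]
  omega

lemma tsum4_add (T S : Table) : tsum4 (T + S) = tsum4 T + tsum4 S := by
  simp only [tsum4, Prod.fst_add, Prod.snd_add]
  ring

lemma tables_zero : tables 0 = {0} := by decide

lemma tables_one : tables 1 = {(1, 0, 0, 0), (0, 1, 0, 0), (0, 0, 1, 0), (0, 0, 0, 1)} := by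
  decide

lemma mcoef_nonneg (k : ℕ) (T : Table) : 0 ≤ mcoef k T := by
  unfold mcoef
  positivity

/-- For a one-voter table `u`, the number of voters of `S` of the type `u`. -/
def tableDot (u S : Table) : ℕ :=
  u.1 * S.1 + u.2.1 * S.2.1 + u.2.2.1 * S.2.2.1 + u.2.2.2 * S.2.2.2

lemma sum_tableDot_tables_one (S : Table) : ∑ u ∈ tables 1, tableDot u S = tsum4 S := by
  simp [tables_one, tableDot, tsum4, add_assoc]

lemma tableDot_eq_zero {u S : Table} (hu : u ∈ tables 1) (h : ¬ u ≤ S) : tableDot u S = 0 := by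
  simp only [tables_one, mem_insert, mem_singleton] at hu
  rcases hu with rfl | rfl | rfl | rfl <;> simp_all [Prod.le_def, tableDot]

lemma tableDot_add_mul_mcoef {u : Table} (hu : u ∈ tables 1) (k : ℕ) (T : Table) :
    (tableDot u (T + u) : ℝ) * mcoef (k + 1) (T + u) = (k + 1) * mcoef k T := by
  simp only [tables_one, mem_insert, mem_singleton] at hu
  obtain ⟨x, y, z, t⟩ := T
  rcases hu with rfl | rfl | rfl | rfl <;>
  · simp only [tableDot, mcoef, Prod.mk_add_mk, zero_mul, one_mul, zero_add, add_zero,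
      Nat.factorial_succ]
    push_cast
    field_simp

lemma sum_tables_succ_eq_sum_add {k : ℕ} {u : Table} (hu : tsum4 u = 1) (g : Table → ℝ)
    (hg : ∀ S, ¬ u ≤ S → g S = 0) :
    ∑ S ∈ tables (k + 1), g S = ∑ T ∈ tables k, g (T + u) := by
  rw [← sum_image fun _ _ _ _ h => add_right_cancel h]
  refine (sum_subset (fun S hS => ?_) fun S hS hS' => hg S fun hle => hS' ?_).symm
  · obtain ⟨T, hT, rfl⟩ := mem_image.mp hS
    rw [mem_tables, tsum4_add, mem_tables.mp hT, hu]
  · refine mem_image.mpr ⟨S - u, mem_tables.mpr ?_, tsub_add_cancel_of_le hle⟩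
    have := tsum4_add (S - u) u
    rw [tsub_add_cancel_of_le hle, mem_tables.mp hS, hu] at this
    omega

def tableMonomial (a b c d : ℝ) (T : Table) : ℝ :=
  a ^ T.1 * b ^ T.2.1 * c ^ T.2.2.1 * d ^ T.2.2.2

lemma tableMonomial_add (a b c d : ℝ) (T S : Table) :
    tableMonomial a b c d (T + S) = tableMonomial a b c d T * tableMonomial a b c d S := by
  simp only [tableMonomial, Prod.fst_add, Prod.snd_add, pow_add]
  ring

noncomputable def multinomialSum (k : ℕ) (f : Table → ℝ) (a b c d : ℝ) : ℝ :=
  ∑ T ∈ tables k, mcoef k T * f T * tableMonomial a b c d T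

lemma multinomialSum_succ_eq_sum (k : ℕ) (f : Table → ℝ) (a b c d : ℝ) :
    multinomialSum (k + 1) f a b c d =
      ∑ u ∈ tables 1,
        tableMonomial a b c d u * multinomialSum k (fun T => f (T + u)) a b c d := by
  refine mul_left_cancel₀ (by positivity : (k + 1 : ℝ) ≠ 0) ?_
  calc (k + 1 : ℝ) * multinomialSum (k + 1) f a b c d
      = ∑ S ∈ tables (k + 1), ∑ u ∈ tables 1,
          (tableDot u S : ℝ) * (mcoef (k + 1) S * f S * tableMonomial a b c d S) := by
        rw [multinomialSum, mul_sum]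
        refine sum_congr rfl fun S hS => ?_
        rw [← sum_mul, ← Nat.cast_sum, sum_tableDot_tables_one, mem_tables.mp hS]
        push_cast
        rfl
    _ = ∑ u ∈ tables 1, ∑ T ∈ tables k,
          (tableDot u (T + u) : ℝ) *
            (mcoef (k + 1) (T + u) * f (T + u) * tableMonomial a b c d (T + u)) := by
        rw [sum_comm]
        refine sum_congr rfl fun u hu => sum_tables_succ_eq_sum_add (mem_tables.mp hu) _ ?_
        intro S hS
        simp [tableDot_eq_zero hu hS]
    _ = (k + 1 : ℝ) * ∑ u ∈ tables 1,
          tableMonomial a b c d u * multinomialSum k (fun T => f (T + u)) a b c d := by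
        rw [mul_sum]
        refine sum_congr rfl fun u hu => ?_
        rw [multinomialSum, mul_sum, mul_sum]
        refine sum_congr rfl fun T _ => ?_
        rw [tableMonomial_add]
        linear_combination (f (T + u) * tableMonomial a b c d T * tableMonomial a b c d u) *
          tableDot_add_mul_mcoef hu k T

lemma multinomialSum_succ (k : ℕ) (f : Table → ℝ) (a b c d : ℝ) :
    multinomialSum (k + 1) f a b c d =
      a * multinomialSum k (fun T => f (T + (1, 0, 0, 0))) a b c d +
      b * multinomialSum k (fun T => f (T + (0, 1, 0, 0))) a b c d +
      c * multinomialSum k (fun T => f (T + (0, 0, 1, 0))) a b c d +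
      d * multinomialSum k (fun T => f (T + (0, 0, 0, 1))) a b c d := by
  simp [multinomialSum_succ_eq_sum, tables_one, tableMonomial, add_assoc]

lemma multinomialSum_mono {k : ℕ} {f g : Table → ℝ} (h : ∀ T ∈ tables k, f T ≤ g T)
    {a b c d : ℝ} (ha : 0 ≤ a) (hb : 0 ≤ b) (hc : 0 ≤ c) (hd : 0 ≤ d) :
    multinomialSum k f a b c d ≤ multinomialSum k g a b c d := by
  refine sum_le_sum fun T hT => ?_
  unfold tableMonomial
  gcongr
  exacts [mcoef_nonneg k T, h T hT]

lemma mul_add_one_sub_mul_le {p q X X' Z Z' : ℝ} (hq : 0 ≤ q) (hqp : q ≤ p) (hp : p ≤ 1)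
    (hZX : Z ≤ X) (hX : X ≤ X') (hZ : Z ≤ Z') :
    q * X + (1 - q) * Z ≤ p * X' + (1 - p) * Z' := by
  nlinarith

theorem multinomialSum_prodWeights_mono {k : ℕ} {f : Table → ℝ}
    (hty : ∀ T, tsum4 T + 1 = k → f (T + (0, 0, 0, 1)) ≤ f (T + (0, 1, 0, 0)))
    (hzx : ∀ T, tsum4 T + 1 = k → f (T + (0, 0, 1, 0)) ≤ f (T + (1, 0, 0, 0)))
    {c d p q : ℝ} (hc : 0 ≤ c) (hd : 0 ≤ d) (hq : 0 ≤ q) (hqp : q ≤ p) (hp : p ≤ 1) :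
    multinomialSum k f (q * c) (q * d) ((1 - q) * c) ((1 - q) * d) ≤
      multinomialSum k f (p * c) (p * d) ((1 - p) * c) ((1 - p) * d) := by
  induction k generalizing f with
  | zero => simp [multinomialSum, tables_zero, tableMonomial]
  | succ k ih =>
    set M : (Table → ℝ) → ℝ → ℝ := fun g s =>
      multinomialSum k g (s * c) (s * d) ((1 - s) * c) ((1 - s) * d)
    have split : ∀ s, multinomialSum (k + 1) f (s * c) (s * d) ((1 - s) * c) ((1 - s) * d) =
        c * (s * M (fun T => f (T + (1, 0, 0, 0))) s +
          (1 - s) * M (fun T => f (T + (0, 0, 1, 0))) s) +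
        d * (s * M (fun T => f (T + (0, 1, 0, 0))) s +
          (1 - s) * M (fun T => f (T + (0, 0, 0, 1))) s) := by
      intro s
      rw [multinomialSum_succ]
      ring
    have hq' : 0 ≤ 1 - q := by linarith
    have hzx_q : M (fun T => f (T + (0, 0, 1, 0))) q ≤ M (fun T => f (T + (1, 0, 0, 0))) q :=
      multinomialSum_mono (fun T hT => hzx T (congrArg (· + 1) (mem_tables.mp hT)))
        (by positivity) (by positivity) (by positivity) (by positivity)
    have hty_q : M (fun T => f (T + (0, 0, 0, 1))) q ≤ M (fun T => f (T + (0, 1, 0, 0))) q :=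
      multinomialSum_mono (fun T hT => hty T (congrArg (· + 1) (mem_tables.mp hT)))
        (by positivity) (by positivity) (by positivity) (by positivity)
    have ih_shift : ∀ u ∈ tables 1, M (fun T => f (T + u)) q ≤ M (fun T => f (T + u)) p := by
      intro u hu
      have hsum : ∀ T, tsum4 T + 1 = k → tsum4 (T + u) + 1 = k + 1 := fun T hT => by
        rw [tsum4_add, mem_tables.mp hu, ← hT]
      refine ih (fun T hT => ?_) (fun T hT => ?_)
      · simpa only [add_right_comm T u] using hty (T + u) (hsum T hT)
      · simpa only [add_right_comm T u] using hzx (T + u) (hsum T hT)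
    rw [split, split]
    gcongr ?_ + ?_
    · exact mul_le_mul_of_nonneg_left (mul_add_one_sub_mul_le hq hqp hp hzx_q
        (ih_shift _ (by decide)) (ih_shift _ (by decide))) hc
    · exact mul_le_mul_of_nonneg_left (mul_add_one_sub_mul_le hq hqp hp hty_q
        (ih_shift _ (by decide)) (ih_shift _ (by decide))) hd

def swapYZ (T : Table) : Table := (T.1, T.2.2.1, T.2.1, T.2.2.2)

lemma swapYZ_involutive : Function.Involutive swapYZ := fun _ => rfl

lemma tsum4_swapYZ (T : Table) : tsum4 (swapYZ T) = tsum4 T := by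
  simp only [tsum4, swapYZ]
  ring

lemma mcoef_swapYZ (k : ℕ) (T : Table) : mcoef k (swapYZ T) = mcoef k T := by
  simp only [mcoef, swapYZ]
  ring

lemma sum_filter_tables_comp_swapYZ {k : ℕ} {P : Table → Prop} [DecidablePred P]
    (hP : ∀ T ∈ tables k, P (swapYZ T) ↔ P T) (g : Table → ℝ) :
    ∑ T ∈ (tables k).filter P, g (swapYZ T) = ∑ T ∈ (tables k).filter P, g T := by
  refine sum_equiv swapYZ_involutive.toPerm (fun T => ?_) fun _ _ => rfl
  simp only [mem_filter, mem_tables, Function.Involutive.coe_toPerm, tsum4_swapYZ]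
  exact and_congr_right fun hT => (hP T (mem_tables.mpr hT)).symm

lemma sum_filter_mcoef_mul_tableMonomial {k : ℕ} (P : Table → Prop) [DecidablePred P]
    (a b c d : ℝ) :
    ∑ T ∈ (tables k).filter P, mcoef k T * tableMonomial a b c d T =
      multinomialSum k (fun T => if P T then 1 else 0) a b c d := by
  rw [sum_filter, multinomialSum]
  refine sum_congr rfl fun T _ => ?_
  split_ifs <;> simp

theorem falsePositive_symmetry_and_bound_general
    (n : ℕ)
    (θ : ℝ) (hθ : 1/2 < θ) (hθ1 : θ < 1)
    (r : ℕ × ℕ × ℕ × ℕ → Fin 2)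
    (hsym : ∀ x y z t : ℕ, x + y + z + t = n → r (x, y, z, t) = r (x, z, y, t))
    (hmono : ∀ T S : ℕ × ℕ × ℕ × ℕ, tsum4 T = n → tsum4 S = n → tableLe T S → r T ≤ r S) :
    (∑ T ∈ (tables n).filter (fun T => r T = 1),
        mcoef n T * θ ^ (T.1 + 2*T.2.1 + T.2.2.2) * (1-θ) ^ (T.1 + 2*T.2.2.1 + T.2.2.2)) =
      (∑ T ∈ (tables n).filter (fun T => r T = 1),
        mcoef n T * θ ^ (T.1 + 2*T.2.2.1 + T.2.2.2) * (1-θ) ^ (T.1 + 2*T.2.1 + T.2.2.2)) ∧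
    (∑ T ∈ (tables n).filter (fun T => r T = 1),
        mcoef n T * θ ^ (T.1 + 2*T.2.1 + T.2.2.2) * (1-θ) ^ (T.1 + 2*T.2.2.1 + T.2.2.2)) ≥
      (∑ T ∈ (tables n).filter (fun T => r T = 1),
        mcoef n T * θ ^ (T.2.1 + T.2.2.1 + 2*T.2.2.2) * (1-θ) ^ (2*T.1 + T.2.1 + T.2.2.1)) := by
  constructor
  · have hr : ∀ T ∈ tables n, r (swapYZ T) = 1 ↔ r T = 1 := by
      rintro ⟨x, y, z, t⟩ hT
      rw [hsym x y z t (mem_tables.mp hT)]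
      rfl
    rw [← sum_filter_tables_comp_swapYZ hr]
    exact sum_congr rfl fun T _ => by rw [mcoef_swapYZ]; rfl
  · have step_mono : ∀ T S, tableStep T S → tsum4 T = n → tsum4 S = n →
        (if r T = 1 then 1 else 0 : ℝ) ≤ if r S = 1 then 1 else 0 := by
      intro T S hTS hT hS
      have := hmono T S hT hS (.single hTS)
      split_ifs <;> first | omega | norm_num
    -- A vote for `P` has probability `p = θ` under `P∧¬Q` and `q = 1 - θ` under `¬P∧¬Q`;
    -- a vote for `Q`, `¬Q` has probability `c = 1 - θ`, `d = θ` under both.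
    have key := multinomialSum_prodWeights_mono (f := fun T => if r T = 1 then 1 else 0)
      (fun T hT => step_mono _ _ (Or.inr (Or.inl ⟨_, _, _, _, rfl, rfl⟩))
        ((tsum4_add _ _).trans hT) ((tsum4_add _ _).trans hT))
      (fun T hT => step_mono _ _ (Or.inr (Or.inr (Or.inr ⟨_, _, _, _, rfl, rfl⟩)))
        ((tsum4_add _ _).trans hT) ((tsum4_add _ _).trans hT))
      (sub_nonneg.mpr hθ1.le) (by linarith : 0 ≤ θ) (sub_nonneg.mpr hθ1.le)
      (by linarith : 1 - θ ≤ θ) hθ1.le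
    simp only [← sum_filter_mcoef_mul_tableMonomial, tableMonomial, sub_sub_cancel, mul_pow]
      at key
    rw [ge_iff_le]
    convert key using 1 <;> exact sum_congr rfl fun T _ => by ring

/-- For an admissible rule `r` and competence `1/2 < θ < 1`, the probability that `r`
decides positively is the same under the states `P∧¬Q` and `¬P∧Q`, and is at least
the corresponding probability under `¬P∧¬Q`. -/
theorem falsePositive_symmetry_and_bound
    (n m : ℕ) (hm : 1 ≤ m) (hn : n = 2 * m + 1)
    (θ : ℝ) (hθ : 1/2 < θ) (hθ1 : θ < 1)
    (r : ℕ × ℕ × ℕ × ℕ → Fin 2)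
    (hsym : ∀ x y z t : ℕ, x + y + z + t = n → r (x, y, z, t) = r (x, z, y, t))
    (hmono : ∀ T S : ℕ × ℕ × ℕ × ℕ, tsum4 T = n → tsum4 S = n → tableLe T S → r T ≤ r S) :
    (∑ T ∈ (tables n).filter (fun T => r T = 1),
        mcoef n T * θ ^ (T.1 + 2*T.2.1 + T.2.2.2) * (1-θ) ^ (T.1 + 2*T.2.2.1 + T.2.2.2)) =
      (∑ T ∈ (tables n).filter (fun T => r T = 1),
        mcoef n T * θ ^ (T.1 + 2*T.2.2.1 + T.2.2.2) * (1-θ) ^ (T.1 + 2*T.2.1 + T.2.2.2)) ∧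
    (∑ T ∈ (tables n).filter (fun T => r T = 1),
        mcoef n T * θ ^ (T.1 + 2*T.2.1 + T.2.2.2) * (1-θ) ^ (T.1 + 2*T.2.2.1 + T.2.2.2)) ≥
      (∑ T ∈ (tables n).filter (fun T => r T = 1),
        mcoef n T * θ ^ (T.2.1 + T.2.2.1 + 2*T.2.2.2) * (1-θ) ^ (2*T.1 + T.2.1 + T.2.2.1)) :=
  falsePositive_symmetry_and_bound_general n θ hθ hθ1 r hsym hmono
end

section
/- For any competence 1/2 < θ < 1 and weight 0 < w < 1, the set of good voting tables is an upper set of the partially ordered set (𝕋, ≤): if T is good and T ≤ S, then S is good. -/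
/-- A table `(x,y,z,t)` is good (for competence `θ` and weight `w`) if
`(θ/(1−θ))^{(y−z)−(x−t)} + (θ/(1−θ))^{(z−y)−(x−t)} < 2(1−w)/w`. -/
def goodTable (θ w : ℝ) (T : ℕ × ℕ × ℕ × ℕ) : Prop :=
  (θ/(1-θ)) ^ (((T.2.1 : ℤ) - T.2.2.1) - ((T.1 : ℤ) - T.2.2.2))
    + (θ/(1-θ)) ^ (((T.2.2.1 : ℤ) - T.2.1) - ((T.1 : ℤ) - T.2.2.2)) < 2*(1-w)/w

/-! Every elementary move of `tableStep` lowers one of the two exponents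
`(y − z) − (x − t)` and `(z − y) − (x − t)` by two and leaves the other unchanged.
Since the odds ratio `θ/(1−θ)` is at least one, the left-hand side of the goodness
inequality can only decrease along `≤`. -/

noncomputable def tableScore (r : ℝ) (T : ℕ × ℕ × ℕ × ℕ) : ℝ :=
  r ^ (((T.2.1 : ℤ) - T.2.2.1) - ((T.1 : ℤ) - T.2.2.2))
    + r ^ (((T.2.2.1 : ℤ) - T.2.1) - ((T.1 : ℤ) - T.2.2.2))

theorem goodTable_iff_tableScore_lt (θ w : ℝ) (T : ℕ × ℕ × ℕ × ℕ) :
    goodTable θ w T ↔ tableScore (θ / (1 - θ)) T < 2 * (1 - w) / w :=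
  Iff.rfl

theorem one_le_div_one_sub {θ : ℝ} (hθ : 1 / 2 ≤ θ) (hθ1 : θ < 1) : 1 ≤ θ / (1 - θ) := by
  rw [one_le_div (by linarith)]
  linarith

theorem tableScore_le_of_tableStep {r : ℝ} (hr : 1 ≤ r) {T S : ℕ × ℕ × ℕ × ℕ}
    (h : tableStep T S) :
    tableScore r S ≤ tableScore r T := by
  rcases h with ⟨x, y, z, t, rfl, rfl⟩ | ⟨x, y, z, t, rfl, rfl⟩ |
    ⟨x, y, z, t, rfl, rfl⟩ | ⟨x, y, z, t, rfl, rfl⟩ <;>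
  exact add_le_add (zpow_le_zpow_right₀ hr (by push_cast; omega))
    (zpow_le_zpow_right₀ hr (by push_cast; omega))

theorem tableScore_le_of_tableLe {r : ℝ} (hr : 1 ≤ r) {T S : ℕ × ℕ × ℕ × ℕ}
    (h : tableLe T S) :
    tableScore r S ≤ tableScore r T := by
  induction h with
  | refl => exact le_rfl
  | tail _ hstep ih => exact (tableScore_le_of_tableStep hr hstep).trans ih

theorem goodTables_upperSet_general
    (n : ℕ)
    (θ : ℝ) (hθ : 1/2 < θ) (hθ1 : θ < 1)
    (w : ℝ) :
    ∀ T S : ℕ × ℕ × ℕ × ℕ, tsum4 T = n → tsum4 S = n →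
      goodTable θ w T → tableLe T S → goodTable θ w S := by
  intro T S _ _ hT hle
  rw [goodTable_iff_tableScore_lt] at hT ⊢
  exact (tableScore_le_of_tableLe (one_le_div_one_sub hθ.le hθ1) hle).trans_lt hT

/-- For any competence `1/2 < θ < 1` and weight `0 < w < 1`, the set of good tables is
an upper set of `(𝕋, ≤)`: if `T` is good and `T ≤ S`, then `S` is good. -/
theorem goodTables_upperSet
    (n m : ℕ) (hm : 1 ≤ m) (hn : n = 2 * m + 1)
    (θ : ℝ) (hθ : 1/2 < θ) (hθ1 : θ < 1)
    (w : ℝ) (hw0 : 0 < w) (hw1 : w < 1) :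
    ∀ T S : ℕ × ℕ × ℕ × ℕ, tsum4 T = n → tsum4 S = n →
      goodTable θ w T → tableLe T S → goodTable θ w S :=
  goodTables_upperSet_general n θ hθ hθ1 w
end

section
/- Let ρ and α be integers with 0 < ρ < α. Then the function G_{ρ,α}(η) = η^{−ρ−α} + η^{−ρ+α} on (1,∞) has a unique critical point η* = ((α+ρ)/(α−ρ))^{1/(2α)} ∈ (1,∞), which is its global minimum; G_{ρ,α} is strictly decreasing on (1,η*) and strictly increasing on (η*,∞), and there exists a unique η₀ ∈ (η*,∞) with G_{ρ,α}(η₀) = 2, such that G_{ρ,α}(η) < 2 for η ∈ (1,η₀) and G_{ρ,α}(η) > 2 for η ∈ (η₀,∞). Consequently, at w = 1/2, a voting table with 0 < x − t < |y − z| is assigned the value 1 by the optimal rule when the competence θ satisfies θ < θ₀ := η₀/(1+η₀), and the value 0 when θ > θ₀. -/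
/-- `G_{ρ,α}(η) = η^{−ρ−α} + η^{−ρ+α}`. -/
noncomputable def Gfun (ρ α : ℤ) (η : ℝ) : ℝ := η ^ (-ρ - α) + η ^ (-ρ + α)

/-!
On `(0,∞)` the derivative of `G_{ρ,α}` factors as
`η^{−ρ−α−1} (α−ρ) (η^{2α} − η*^{2α})`, so for `|ρ| < α` it has the sign of `η − η*`:
`G_{ρ,α}` decreases up to `η*` and increases after it. Since `G_{ρ,α}(1) = 2` and `ρ > 0`
puts `η*` beyond `1`, the minimum is below `2`; as `G_{ρ,α}(η) > η`, the intermediate value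
theorem gives the unique crossing `η₀ > η*` of the level `2`. A table with `x − t = ρ`,
`|y − z| = α` is good at `w = 1/2` iff `G_{ρ,α}(θ/(1−θ)) < 2`, and `θ ↦ θ/(1−θ)` is the
inverse of `η ↦ η/(1+η)`.
-/

open Set

section Gfun

variable {ρ α : ℤ} {η : ℝ}

lemma Gfun_one (ρ α : ℤ) : Gfun ρ α 1 = 2 := by
  norm_num [Gfun]

lemma Gfun_neg_right (ρ α : ℤ) : Gfun ρ (-α) = Gfun ρ α := by
  funext η
  simp only [Gfun, sub_neg_eq_add, ← sub_eq_add_neg]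
  exact add_comm _ _

lemma Gfun_abs_right (ρ α : ℤ) : Gfun ρ |α| = Gfun ρ α := by
  rcases abs_choice α with h | h <;> rw [h]
  exact Gfun_neg_right ρ α

lemma lt_Gfun_self (hρα : ρ < α) (hη : 1 ≤ η) : η < Gfun ρ α η := by
  have hpos : 0 < η ^ (-ρ - α) := zpow_pos (by linarith) _
  have hle : η ^ (1 : ℤ) ≤ η ^ (-ρ + α) := zpow_le_zpow_right₀ hη (by omega)
  rw [zpow_one] at hle
  rw [Gfun]
  linarith

lemma hasDerivAt_Gfun (ρ α : ℤ) (hη : η ≠ 0) :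
    HasDerivAt (Gfun ρ α)
      (η ^ (-ρ - α - 1) * (((α : ℝ) - ρ) * η ^ (2 * α) - ((α : ℝ) + ρ))) η := by
  have hsplit : η ^ (-ρ + α - 1) = η ^ (-ρ - α - 1) * η ^ (2 * α) := by
    rw [← zpow_add₀ hη]; ring_nf
  refine ((hasDerivAt_zpow (-ρ - α) η (.inl hη)).add
    (hasDerivAt_zpow (-ρ + α) η (.inl hη))).congr_deriv ?_
  rw [hsplit]
  push_cast
  ring

lemma continuousOn_Gfun (ρ α : ℤ) : ContinuousOn (Gfun ρ α) (Ioi 0) :=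
  fun _ hη => (hasDerivAt_Gfun ρ α (ne_of_gt hη)).continuousAt.continuousWithinAt

/-- The critical point `η*` of `G_{ρ,α}`. -/
noncomputable def Gcrit (ρ α : ℤ) : ℝ :=
  (((α : ℝ) + (ρ : ℝ)) / ((α : ℝ) - (ρ : ℝ))) ^ ((1 : ℝ) / (2 * (α : ℝ)))

section Critical

variable (hρα : |ρ| < α)
include hρα

lemma Gcrit_pos : 0 < Gcrit ρ α := by
  obtain ⟨h₁, h₂⟩ := abs_lt.1 hρα
  have : (0 : ℝ) < ((α : ℝ) + ρ) / ((α : ℝ) - ρ) :=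
    div_pos (by exact_mod_cast (by omega : 0 < α + ρ)) (by exact_mod_cast (by omega : 0 < α - ρ))
  exact Real.rpow_pos_of_pos this _

lemma Gcrit_zpow : Gcrit ρ α ^ (2 * α) = ((α : ℝ) + ρ) / ((α : ℝ) - ρ) := by
  obtain ⟨h₁, h₂⟩ := abs_lt.1 hρα
  have hα : (α : ℝ) ≠ 0 := by exact_mod_cast (by omega : α ≠ 0)
  have hc : (0 : ℝ) ≤ ((α : ℝ) + ρ) / ((α : ℝ) - ρ) :=
    div_nonneg (by exact_mod_cast (by omega : 0 ≤ α + ρ)) (by exact_mod_cast (by omega : 0 ≤ α - ρ))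
  rw [Gcrit, ← Real.rpow_intCast, ← Real.rpow_mul hc]
  push_cast
  rw [one_div_mul_cancel (by positivity), Real.rpow_one]

lemma deriv_Gfun_eq (hη : 0 < η) :
    deriv (Gfun ρ α) η
      = η ^ (-ρ - α - 1) * ((α : ℝ) - ρ) * (η ^ (2 * α) - Gcrit ρ α ^ (2 * α)) := by
  have hαρ : (α : ℝ) - ρ ≠ 0 := by exact_mod_cast (by grind : α - ρ ≠ 0)
  rw [(hasDerivAt_Gfun ρ α hη.ne').deriv, Gcrit_zpow hρα]
  field_simp

lemma deriv_Gfun_neg (hη : 0 < η) (h : η < Gcrit ρ α) : deriv (Gfun ρ α) η < 0 := by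
  have hαρ : (0 : ℝ) < α - ρ := by exact_mod_cast (by grind : 0 < α - ρ)
  rw [deriv_Gfun_eq hρα hη]
  exact mul_neg_of_pos_of_neg (mul_pos (zpow_pos hη _) hαρ)
    (sub_neg.2 (zpow_lt_zpow_left₀ (by grind) hη.le h))

lemma deriv_Gfun_pos (h : Gcrit ρ α < η) : 0 < deriv (Gfun ρ α) η := by
  have hαρ : (0 : ℝ) < α - ρ := by exact_mod_cast (by grind : 0 < α - ρ)
  have hη : 0 < η := (Gcrit_pos hρα).trans h
  rw [deriv_Gfun_eq hρα hη]
  exact mul_pos (mul_pos (zpow_pos hη _) hαρ)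
    (sub_pos.2 (zpow_lt_zpow_left₀ (by grind) (Gcrit_pos hρα).le h))

lemma deriv_Gfun_eq_zero_iff (hη : 0 < η) : deriv (Gfun ρ α) η = 0 ↔ η = Gcrit ρ α := by
  have hαρ : (α : ℝ) - ρ ≠ 0 := by exact_mod_cast (by grind : α - ρ ≠ 0)
  rw [deriv_Gfun_eq hρα hη, mul_eq_zero, sub_eq_zero,
    zpow_left_inj₀ hη.le (Gcrit_pos hρα).le (by grind)]
  simp [(zpow_pos hη _).ne', hαρ]

lemma Gfun_strictAntiOn : StrictAntiOn (Gfun ρ α) (Ioc 0 (Gcrit ρ α)) := by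
  refine strictAntiOn_of_deriv_neg (convex_Ioc _ _)
    ((continuousOn_Gfun ρ α).mono Ioc_subset_Ioi_self) fun η hη => ?_
  rw [interior_Ioc] at hη
  exact deriv_Gfun_neg hρα hη.1 hη.2

lemma Gfun_strictMonoOn : StrictMonoOn (Gfun ρ α) (Ici (Gcrit ρ α)) := by
  refine strictMonoOn_of_deriv_pos (convex_Ici _)
    ((continuousOn_Gfun ρ α).mono (Ici_subset_Ioi.2 (Gcrit_pos hρα))) fun η hη => ?_
  rw [interior_Ici] at hη
  exact deriv_Gfun_pos hρα hη

lemma Gfun_Gcrit_lt (hη : 0 < η) (hne : η ≠ Gcrit ρ α) :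
    Gfun ρ α (Gcrit ρ α) < Gfun ρ α η := by
  rcases hne.lt_or_gt with h | h
  · exact Gfun_strictAntiOn hρα ⟨hη, h.le⟩ ⟨Gcrit_pos hρα, le_rfl⟩ h
  · exact Gfun_strictMonoOn hρα self_mem_Ici h.le h

lemma Gfun_lt_two {η₀ : ℝ} (hη₀ : Gcrit ρ α ≤ η₀) (hG : Gfun ρ α η₀ = 2) (h1 : 1 < η)
    (h : η < η₀) : Gfun ρ α η < 2 := by
  rcases le_or_gt η (Gcrit ρ α) with hc | hc
  · rw [← Gfun_one ρ α]
    exact Gfun_strictAntiOn hρα ⟨one_pos, h1.le.trans hc⟩ ⟨by linarith, hc⟩ h1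
  · rw [← hG]
    exact Gfun_strictMonoOn hρα hc.le hη₀ h

lemma two_lt_Gfun {η₀ : ℝ} (hη₀ : Gcrit ρ α ≤ η₀) (hG : Gfun ρ α η₀ = 2) (h : η₀ < η) :
    2 < Gfun ρ α η := by
  rw [← hG]
  exact Gfun_strictMonoOn hρα hη₀ (hη₀.trans h.le) h

end Critical

lemma one_lt_Gcrit (h0 : 0 < ρ) (hρα : ρ < α) : 1 < Gcrit ρ α := by
  have hρ : (0 : ℝ) < ρ := by exact_mod_cast h0
  have hα : (0 : ℝ) < α := by exact_mod_cast h0.trans hρα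
  have hαρ : (0 : ℝ) < α - ρ := by exact_mod_cast sub_pos.2 hρα
  exact Real.one_lt_rpow ((one_lt_div hαρ).2 (by linarith)) (by positivity)

lemma exists_Gfun_eq_two (h0 : 0 < ρ) (hρα : ρ < α) :
    ∃ η₀, Gcrit ρ α < η₀ ∧ Gfun ρ α η₀ = 2 := by
  have hα : |ρ| < α := abs_lt.2 ⟨by omega, hρα⟩
  have h1 := one_lt_Gcrit h0 hρα
  have hmin : Gfun ρ α (Gcrit ρ α) < 2 :=
    Gfun_one ρ α ▸ Gfun_strictAntiOn hα ⟨one_pos, h1.le⟩ ⟨by linarith, le_rfl⟩ h1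
  set η₁ := max (Gcrit ρ α) 3
  have hbig : 2 < Gfun ρ α η₁ := by
    have h3 : 3 ≤ η₁ := le_max_right _ _
    linarith [lt_Gfun_self hρα (by linarith : 1 ≤ η₁)]
  obtain ⟨η₀, hmem, hG⟩ := intermediate_value_Icc (le_max_left _ 3)
    ((continuousOn_Gfun ρ α).mono fun η hη => show 0 < η by linarith [hη.1]) ⟨hmin.le, hbig.le⟩
  exact ⟨η₀, hmem.1.lt_of_ne (by rintro rfl; linarith), hG⟩

end Gfun

lemma goodTable_half_iff (θ : ℝ) (x y z t : ℕ) :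
    goodTable θ (1/2) (x, y, z, t) ↔ Gfun ((x : ℤ) - t) |(y : ℤ) - z| (θ / (1 - θ)) < 2 := by
  rw [Gfun_abs_right, goodTable, Gfun, add_comm, show 2 * (1 - 1/2) / (1/2 : ℝ) = 2 by norm_num]
  ring_nf

lemma div_one_sub_lt_iff {θ η : ℝ} (hθ : θ < 1) (hη : 0 < 1 + η) :
    θ / (1 - θ) < η ↔ θ < η / (1 + η) := by
  rw [div_lt_iff₀ (sub_pos.2 hθ), lt_div_iff₀ hη]
  constructor <;> intro h <;> linarith

lemma lt_div_one_sub_iff {θ η : ℝ} (hθ : θ < 1) (hη : 0 < 1 + η) :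
    η < θ / (1 - θ) ↔ η / (1 + η) < θ := by
  rw [lt_div_iff₀ (sub_pos.2 hθ), div_lt_iff₀ hη]
  constructor <;> intro h <;> linarith

/-- For integers `0 < ρ < α`, the function `G_{ρ,α}` on `(1,∞)` has a unique critical
point `η* = ((α+ρ)/(α−ρ))^{1/(2α)}`, its global minimum; it is strictly decreasing on
`(1,η*)`, strictly increasing on `(η*,∞)`, and there is a unique `η₀ ∈ (η*,∞)` with
`G_{ρ,α}(η₀) = 2`; moreover `G_{ρ,α}(η) < 2` on `(1,η₀)` and `> 2` on `(η₀,∞)`.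
Consequently, at `w = 1/2`, a voting table with `0 < x − t < |y − z|` is good (value 1
under the optimal rule) exactly when the competence `θ` is below `θ₀ = η₀/(1+η₀)`. -/
theorem Gfun_unique_minimum_and_threshold (ρ α : ℤ) (h0 : 0 < ρ) (hρα : ρ < α) :
    ∃ ηstar η₀ : ℝ,
      ηstar = (((α : ℝ) + (ρ : ℝ)) / ((α : ℝ) - (ρ : ℝ))) ^ ((1 : ℝ) / (2 * (α : ℝ))) ∧
      1 < ηstar ∧
      (∀ η : ℝ, 1 < η → (deriv (Gfun ρ α) η = 0 ↔ η = ηstar)) ∧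
      StrictAntiOn (Gfun ρ α) (Set.Ioo 1 ηstar) ∧
      StrictMonoOn (Gfun ρ α) (Set.Ioi ηstar) ∧
      (∀ η : ℝ, 1 < η → η ≠ ηstar → Gfun ρ α ηstar < Gfun ρ α η) ∧
      ηstar < η₀ ∧
      Gfun ρ α η₀ = 2 ∧
      (∀ η : ℝ, ηstar < η → Gfun ρ α η = 2 → η = η₀) ∧
      (∀ η : ℝ, 1 < η → η < η₀ → Gfun ρ α η < 2) ∧
      (∀ η : ℝ, η₀ < η → 2 < Gfun ρ α η) ∧
      (∀ θ : ℝ, 1/2 < θ → θ < 1 →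
        ∀ x y z t : ℕ, (x : ℤ) - t = ρ → |(y : ℤ) - z| = α →
          (θ < η₀ / (1 + η₀) → goodTable θ (1/2) (x, y, z, t)) ∧
          (η₀ / (1 + η₀) < θ → ¬ goodTable θ (1/2) (x, y, z, t))) := by
  have hα : |ρ| < α := abs_lt.2 ⟨by omega, hρα⟩
  have hcrit := one_lt_Gcrit h0 hρα
  obtain ⟨η₀, hcrit_lt, hG₀⟩ := exists_Gfun_eq_two h0 hρα
  have hη₀ : 0 < 1 + η₀ := by linarith
  refine ⟨Gcrit ρ α, η₀, rfl, hcrit,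
    fun η hη => deriv_Gfun_eq_zero_iff hα (by linarith),
    (Gfun_strictAntiOn hα).mono fun η hη => ⟨by linarith [hη.1], hη.2.le⟩,
    (Gfun_strictMonoOn hα).mono Ioi_subset_Ici_self,
    fun η hη => Gfun_Gcrit_lt hα (by linarith), hcrit_lt, hG₀,
    fun η hη hG => (Gfun_strictMonoOn hα).injOn hη.le hcrit_lt.le (hG.trans hG₀.symm),
    fun η => Gfun_lt_two hα hcrit_lt.le hG₀, fun η => two_lt_Gfun hα hcrit_lt.le hG₀, ?_⟩
  intro θ hθ hθ1 x y z t hxt hyz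
  have hodds : 1 < θ / (1 - θ) := (one_lt_div (by linarith)).2 (by linarith)
  rw [goodTable_half_iff, hxt, hyz]
  exact ⟨fun h => Gfun_lt_two hα hcrit_lt.le hG₀ hodds ((div_one_sub_lt_iff hθ1 hη₀).2 h),
    fun h => (two_lt_Gfun hα hcrit_lt.le hG₀ ((lt_div_one_sub_iff hθ1 hη₀).2 h)).not_gt⟩
end

section
/- Let (X, ≤) be a finite partially ordered set, ∼ an equivalence relation on X, and define the relation ⪯ on the quotient X/∼ by: x̄ ⪯ ȳ if and only if there exist x ∈ x̄ and y ∈ ȳ with x ≤ y. Assume that whenever x̄ ⪯ ȳ, for every x ∈ x̄ there exists y ∈ ȳ with x ≤ y. Then ⪯ is a partial order on X/∼ (in particular it is antisymmetric). -/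
/-!
Let `x` be a maximal element of the (finite, nonempty) class `p`. If `p ⪯ q` and `q ⪯ p`,
the lifting property gives `x ≤ y ≤ x'` with `y ∈ q` and `x' ∈ p`; maximality forces `x = x'`,
hence `x = y` and `p = q`.
-/

theorem Maximal.mem_of_forall_exists_le {X : Type*} [PartialOrder X] {A B : Set X} {x : X}
    (hx : Maximal (· ∈ A) x) (hAB : ∀ a ∈ A, ∃ b ∈ B, a ≤ b)
    (hBA : ∀ b ∈ B, ∃ a ∈ A, b ≤ a) : x ∈ B := by
  obtain ⟨b, hb, hxb⟩ := hAB x hx.prop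
  obtain ⟨a, ha, hba⟩ := hBA b hb
  have hxa : x = a := hx.eq_of_le ha (hxb.trans hba)
  rwa [le_antisymm hxb (hxa ▸ hba)]

/-- Hallam's lemma: let `(X, ≤)` be a finite poset, `∼` an equivalence relation on `X`,
and define `⪯` on `X/∼` by `x̄ ⪯ ȳ ↔ ∃ x ∈ x̄, ∃ y ∈ ȳ, x ≤ y`.  If whenever `x̄ ⪯ ȳ`,
every `x ∈ x̄` admits some `y ∈ ȳ` with `x ≤ y`, then `⪯` is a partial order on `X/∼`
(reflexive, transitive, and in particular antisymmetric). -/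
theorem quotient_partialOrder_of_liftable
    {X : Type*} [Finite X] [PartialOrder X] (s : Setoid X)
    (R : Quotient s → Quotient s → Prop)
    (hR : ∀ p q : Quotient s,
      R p q ↔ ∃ x y : X, Quotient.mk s x = p ∧ Quotient.mk s y = q ∧ x ≤ y)
    (hyp : ∀ p q : Quotient s, R p q →
      ∀ x : X, Quotient.mk s x = p → ∃ y : X, Quotient.mk s y = q ∧ x ≤ y) :
    (∀ p, R p p) ∧
    (∀ p q r : Quotient s, R p q → R q r → R p r) ∧
    (∀ p q : Quotient s, R p q → R q p → p = q) := by
  refine ⟨fun p ↦ ?_, fun p q r hpq hqr ↦ ?_, fun p q hpq hqp ↦ ?_⟩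
  · obtain ⟨x, hx⟩ := Quotient.exists_rep p
    exact (hR p p).2 ⟨x, x, hx, hx, le_rfl⟩
  · obtain ⟨x, y, hx, hy, hxy⟩ := (hR p q).1 hpq
    obtain ⟨z, hz, hyz⟩ := hyp q r hqr y hy
    exact (hR p r).2 ⟨x, z, hx, hz, hxy.trans hyz⟩
  · obtain ⟨x, hx⟩ := (Set.toFinite {x | Quotient.mk s x = p}).exists_maximal
      (Quotient.exists_rep p)
    have hxq : Quotient.mk s x = q := hx.mem_of_forall_exists_le
      (B := {y | Quotient.mk s y = q}) (by simpa using hyp p q hpq) (by simpa using hyp q p hqp)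
    exact hx.prop.symm.trans hxq
end

section
/- Let n = 2m+1 with m ≥ 1, let 0 < w < 1 be the weight and 1/2 < θ < 1 the competence. The premiss-based rule r_pb is optimal — i.e., L_w(r_pb) ≤ L_w(r) for every admissible rule r — if and only if θ ≥ w and θ/(1−θ) + (θ/(1−θ))^{−n} ≥ 2(1−w)/w. -/
/-- A rule is admissible if it is invariant under transposition and order-preserving. -/
def Admissible (n : ℕ) (r : ℕ × ℕ × ℕ × ℕ → Fin 2) : Prop :=
  (∀ x y z t : ℕ, x + y + z + t = n → r (x, y, z, t) = r (x, z, y, t)) ∧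
  (∀ T S : ℕ × ℕ × ℕ × ℕ, tsum4 T = n → tsum4 S = n → tableLe T S → r T ≤ r S)

/-- The loss `L_w(r) = w·ℙ_r(FP) + (1−w)·ℙ_r(FN)`. -/
noncomputable def loss (n : ℕ) (w θ : ℝ) (r : ℕ × ℕ × ℕ × ℕ → Fin 2) : ℝ :=
  w * ∑ T ∈ (tables n).filter (fun T => r T = 1),
        mcoef n T * θ ^ (T.1 + 2*T.2.1 + T.2.2.2) * (1-θ) ^ (T.1 + 2*T.2.2.1 + T.2.2.2)
  + (1-w) * ∑ T ∈ (tables n).filter (fun T => r T = 0),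
        mcoef n T * θ ^ (2*T.1 + T.2.1 + T.2.2.1) * (1-θ) ^ (T.2.1 + T.2.2.1 + 2*T.2.2.2)

/-- The premiss-based rule: decide `C` iff `x+y > z+t` and `x+z > y+t`. -/
def rulePB : ℕ × ℕ × ℕ × ℕ → Fin 2 := fun T =>
  if T.2.2.1 + T.2.2.2 < T.1 + T.2.1 ∧ T.2.1 + T.2.2.2 < T.1 + T.2.2.1 then 1 else 0

/-!
Write `ρ = θ / (1 - θ)` and let `a = x + y - z - t`, `b = x + z - y - t` be the margins of the two
premisses. Accepting a table `T` instead of rejecting it changes the loss by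
`mcoef n T * fnWeight θ T * (w ρ⁻ᵇ - (1 - w))`, and transposing `y ↔ z` swaps `a` and `b` while
keeping the factor in front. For a symmetric rule only the sum over `T` and its transpose matters,
which is `≤ 0` exactly when `w (ρ⁻ᵃ + ρ⁻ᵇ) ≤ 2 (1 - w)`. If `w ≤ θ` this holds when both margins are
positive, and since `n` is odd a table rejected by `rulePB` has one margin `≤ -1` and the other
`≥ -n`, so the pair costs at least `w (ρ + ρ⁻ⁿ) - 2 (1 - w) ≥ 0`: `rulePB` is optimal.
Conversely, any monotone symmetric condition on the margins is admissible. If `θ < w`, rejecting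
the tables with margins `(1, 1)` lowers the loss; if `w (ρ + ρ⁻ⁿ) < 2 (1 - w)`, accepting the two
tables with margins `(n, -1)` and `(-1, n)` does.
-/

namespace PremissBased

open Finset

variable {n m : ℕ} {w θ : ℝ}

def transpose (T : ℕ × ℕ × ℕ × ℕ) : ℕ × ℕ × ℕ × ℕ := (T.1, T.2.2.1, T.2.1, T.2.2.2)

def margin₁ (T : ℕ × ℕ × ℕ × ℕ) : ℤ := (T.1 + T.2.1 : ℤ) - T.2.2.1 - T.2.2.2

def margin₂ (T : ℕ × ℕ × ℕ × ℕ) : ℤ := (T.1 + T.2.2.1 : ℤ) - T.2.1 - T.2.2.2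

noncomputable def odds (θ : ℝ) : ℝ := θ / (1 - θ)

-- Up to the factor `mcoef n T`, the probability of `T` in the state where accepting, resp.
-- rejecting, is the wrong decision.
noncomputable def fpWeight (θ : ℝ) (T : ℕ × ℕ × ℕ × ℕ) : ℝ :=
  θ ^ (T.1 + 2*T.2.1 + T.2.2.2) * (1-θ) ^ (T.1 + 2*T.2.2.1 + T.2.2.2)

noncomputable def fnWeight (θ : ℝ) (T : ℕ × ℕ × ℕ × ℕ) : ℝ :=
  θ ^ (2*T.1 + T.2.1 + T.2.2.1) * (1-θ) ^ (T.2.1 + T.2.2.1 + 2*T.2.2.2)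

lemma mem_tables {T : ℕ × ℕ × ℕ × ℕ} : T ∈ tables n ↔ tsum4 T = n := by
  rw [tables, mem_filter, and_iff_right_iff_imp]
  obtain ⟨x, y, z, t⟩ := T
  simp only [tsum4, mem_product, mem_range]
  omega

lemma tsum4_transpose (T : ℕ × ℕ × ℕ × ℕ) : tsum4 (transpose T) = tsum4 T := by
  simp only [tsum4, transpose]; omega

lemma margin₁_transpose (T : ℕ × ℕ × ℕ × ℕ) : margin₁ (transpose T) = margin₂ T := rfl

lemma margin₂_transpose (T : ℕ × ℕ × ℕ × ℕ) : margin₂ (transpose T) = margin₁ T := rfl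

lemma mcoef_transpose (T : ℕ × ℕ × ℕ × ℕ) : mcoef n (transpose T) = mcoef n T := by
  simp only [mcoef, transpose]; ring

lemma fnWeight_transpose (T : ℕ × ℕ × ℕ × ℕ) : fnWeight θ (transpose T) = fnWeight θ T := by
  simp only [fnWeight, transpose]; ring_nf

lemma mcoef_pos (T : ℕ × ℕ × ℕ × ℕ) : 0 < mcoef n T := by
  unfold mcoef; positivity

lemma fnWeight_pos (hθ0 : 0 < θ) (hθ1 : θ < 1) (T : ℕ × ℕ × ℕ × ℕ) : 0 < fnWeight θ T := by
  have : 0 < 1 - θ := sub_pos.2 hθ1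
  unfold fnWeight; positivity

lemma one_lt_odds (hθ : 1/2 < θ) (hθ1 : θ < 1) : 1 < odds θ := by
  rw [odds, one_lt_div (by linarith)]; linarith

lemma mul_odds_inv_le_iff (hθ0 : 0 < θ) : w * (odds θ)⁻¹ ≤ 1 - w ↔ w ≤ θ := by
  rw [odds, inv_div, ← mul_div_assoc, div_le_iff₀ hθ0]
  constructor <;> intro h <;> nlinarith

lemma fpWeight_eq (hθ0 : 0 < θ) (hθ1 : θ < 1) (T : ℕ × ℕ × ℕ × ℕ) :
    fpWeight θ T = fnWeight θ T * odds θ ^ (-margin₂ T) := by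
  obtain ⟨x, y, z, t⟩ := T
  have hp : θ ≠ 0 := hθ0.ne'
  have hq : 1 - θ ≠ 0 := (sub_pos.2 hθ1).ne'
  have e₁ : ((x + 2*y + t : ℕ) : ℤ) = (2*x + y + z : ℕ) + -margin₂ (x, y, z, t) := by
    simp only [margin₂]; push_cast; ring
  have e₂ : ((x + 2*z + t : ℕ) : ℤ) = (y + z + 2*t : ℕ) + margin₂ (x, y, z, t) := by
    simp only [margin₂]; push_cast; ring
  simp only [fpWeight, fnWeight, odds]
  rw [← zpow_natCast θ, ← zpow_natCast (1 - θ), e₁, e₂, zpow_add₀ hp, zpow_add₀ hq, div_zpow,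
    zpow_neg (1 - θ), div_inv_eq_mul, zpow_natCast, zpow_natCast]
  ring

def acceptSet (n : ℕ) (r : ℕ × ℕ × ℕ × ℕ → Fin 2) : Finset (ℕ × ℕ × ℕ × ℕ) :=
  (tables n).filter (fun T => r T = 1)

noncomputable def acceptCost (n : ℕ) (w θ : ℝ) (T : ℕ × ℕ × ℕ × ℕ) : ℝ :=
  mcoef n T * (w * fpWeight θ T - (1 - w) * fnWeight θ T)

lemma loss_eq (r : ℕ × ℕ × ℕ × ℕ → Fin 2) :
    loss n w θ r = (1 - w) * ∑ T ∈ tables n, mcoef n T * fnWeight θ T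
      + ∑ T ∈ acceptSet n r, acceptCost n w θ T := by
  have hreject : (tables n).filter (fun T => r T = 0) = (tables n).filter (fun T => ¬ r T = 1) :=
    filter_congr fun T _ => by omega
  have hloss : loss n w θ r = w * ∑ T ∈ acceptSet n r, mcoef n T * fpWeight θ T
      + (1 - w) * ∑ T ∈ (tables n).filter (fun T => ¬ r T = 1), mcoef n T * fnWeight θ T := by
    simp only [loss, hreject, acceptSet, fpWeight, fnWeight, mul_assoc]
  have hcost : ∑ T ∈ acceptSet n r, acceptCost n w θ T
      = w * ∑ T ∈ acceptSet n r, mcoef n T * fpWeight θ T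
        - (1 - w) * ∑ T ∈ acceptSet n r, mcoef n T * fnWeight θ T := by
    rw [mul_sum, mul_sum, ← sum_sub_distrib]
    exact sum_congr rfl fun T _ => by unfold acceptCost; ring
  rw [hloss, hcost, ← sum_filter_add_sum_filter_not (tables n) (fun T => r T = 1), acceptSet]
  ring

lemma loss_sub_loss_of_subset {r r' : ℕ × ℕ × ℕ × ℕ → Fin 2} (h : acceptSet n r' ⊆ acceptSet n r) :
    loss n w θ r - loss n w θ r' = ∑ T ∈ acceptSet n r \ acceptSet n r', acceptCost n w θ T := by
  rw [loss_eq, loss_eq, ← sum_sdiff h]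
  ring

lemma loss_le_loss_iff {r r' : ℕ × ℕ × ℕ × ℕ → Fin 2} :
    loss n w θ r ≤ loss n w θ r' ↔
      ∑ T ∈ acceptSet n r, acceptCost n w θ T ≤ ∑ T ∈ acceptSet n r', acceptCost n w θ T := by
  rw [loss_eq, loss_eq, add_le_add_iff_left]

lemma acceptCost_eq (hθ0 : 0 < θ) (hθ1 : θ < 1) (T : ℕ × ℕ × ℕ × ℕ) :
    acceptCost n w θ T = mcoef n T * fnWeight θ T * (w * odds θ ^ (-margin₂ T) - (1 - w)) := by
  rw [acceptCost, fpWeight_eq hθ0 hθ1]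
  ring

lemma acceptCost_add_acceptCost_transpose (hθ0 : 0 < θ) (hθ1 : θ < 1) (T : ℕ × ℕ × ℕ × ℕ) :
    acceptCost n w θ T + acceptCost n w θ (transpose T) = mcoef n T * fnWeight θ T *
      (w * (odds θ ^ (-margin₁ T) + odds θ ^ (-margin₂ T)) - 2 * (1 - w)) := by
  rw [acceptCost_eq hθ0 hθ1, acceptCost_eq hθ0 hθ1, mcoef_transpose, fnWeight_transpose,
    margin₂_transpose]
  ring

lemma acceptCost_nonpos (hθ : 1/2 < θ) (hθ1 : θ < 1) (hw0 : 0 ≤ w) (hwθ : w ≤ θ)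
    {T : ℕ × ℕ × ℕ × ℕ} (hT : 0 < margin₂ T) : acceptCost n w θ T ≤ 0 := by
  have hθ0 : 0 < θ := by linarith
  have hodds : odds θ ^ (-margin₂ T) ≤ (odds θ)⁻¹ := by
    rw [← zpow_neg_one]
    exact zpow_le_zpow_right₀ (one_lt_odds hθ hθ1).le (by omega)
  rw [acceptCost_eq hθ0 hθ1]
  refine mul_nonpos_of_nonneg_of_nonpos (mul_pos (mcoef_pos T) (fnWeight_pos hθ0 hθ1 T)).le ?_
  calc w * odds θ ^ (-margin₂ T) - (1 - w) ≤ w * (odds θ)⁻¹ - (1 - w) := by gcongr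
    _ ≤ 0 := sub_nonpos.2 ((mul_odds_inv_le_iff hθ0).2 hwθ)

lemma acceptCost_pos (hθ0 : 0 < θ) (hθ1 : θ < 1) (hwθ : θ < w)
    {T : ℕ × ℕ × ℕ × ℕ} (hT : margin₂ T = 1) : 0 < acceptCost n w θ T := by
  rw [acceptCost_eq hθ0 hθ1, hT, zpow_neg_one]
  exact mul_pos (mul_pos (mcoef_pos T) (fnWeight_pos hθ0 hθ1 T))
    (sub_pos.2 (not_le.1 (mt (mul_odds_inv_le_iff hθ0).1 (not_le.2 hwθ))))

lemma add_zpow_neg_le {K : Type*} [Field K] [LinearOrder K] [IsStrictOrderedRing K] {ρ : K}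
    (hρ : 1 ≤ ρ) {k a b : ℤ} (ha : a ≤ k) (hb : b ≤ k) (hab : a ≤ -1 ∨ b ≤ -1) :
    ρ + ρ ^ (-k) ≤ ρ ^ (-a) + ρ ^ (-b) := by
  rcases hab with hab | hab
  · have h₁ : ρ ^ (1 : ℤ) ≤ ρ ^ (-a) := zpow_le_zpow_right₀ hρ (by omega)
    have h₂ : ρ ^ (-k) ≤ ρ ^ (-b) := zpow_le_zpow_right₀ hρ (by omega)
    rw [zpow_one] at h₁
    exact add_le_add h₁ h₂
  · have h₁ : ρ ^ (1 : ℤ) ≤ ρ ^ (-b) := zpow_le_zpow_right₀ hρ (by omega)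
    have h₂ : ρ ^ (-k) ≤ ρ ^ (-a) := zpow_le_zpow_right₀ hρ (by omega)
    rw [zpow_one] at h₁
    rw [add_comm (ρ ^ (-a))]
    exact add_le_add h₁ h₂

lemma acceptCost_add_acceptCost_transpose_nonneg (hn : n = 2 * m + 1) (hw0 : 0 < w)
    (hθ : 1/2 < θ) (hθ1 : θ < 1) (hc : 2 * (1 - w) / w ≤ odds θ + odds θ ^ (-(n : ℤ)))
    {T : ℕ × ℕ × ℕ × ℕ} (hT : T ∈ tables n) (hpb : ¬ (0 < margin₁ T ∧ 0 < margin₂ T)) :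
    0 ≤ acceptCost n w θ T + acceptCost n w θ (transpose T) := by
  have hθ0 : 0 < θ := by linarith
  -- the margins have the parity of `n`, so neither vanishes
  have hmargins : margin₁ T ≤ n ∧ margin₂ T ≤ n ∧ (margin₁ T ≤ -1 ∨ margin₂ T ≤ -1) := by
    obtain ⟨x, y, z, t⟩ := T
    rw [mem_tables] at hT
    simp only [tsum4, margin₁, margin₂] at hT hpb ⊢
    omega
  rw [acceptCost_add_acceptCost_transpose hθ0 hθ1]
  refine mul_nonneg (mul_pos (mcoef_pos T) (fnWeight_pos hθ0 hθ1 T)).le (sub_nonneg.2 ?_)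
  calc 2 * (1 - w) ≤ w * (odds θ + odds θ ^ (-(n : ℤ))) := by rwa [div_le_iff₀' hw0] at hc
    _ ≤ w * (odds θ ^ (-margin₁ T) + odds θ ^ (-margin₂ T)) :=
      mul_le_mul_of_nonneg_left
        (add_zpow_neg_le (one_lt_odds hθ hθ1).le hmargins.1 hmargins.2.1 hmargins.2.2) hw0.le

def marginRule (P : ℤ → ℤ → Prop) [DecidableRel P] (T : ℕ × ℕ × ℕ × ℕ) : Fin 2 :=
  if P (margin₁ T) (margin₂ T) then 1 else 0

lemma marginRule_eq_one_iff {P : ℤ → ℤ → Prop} [DecidableRel P] {T : ℕ × ℕ × ℕ × ℕ} :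
    marginRule P T = 1 ↔ P (margin₁ T) (margin₂ T) := by
  unfold marginRule
  split_ifs with h <;> simp [h]

lemma margin_le_of_tableStep {T S : ℕ × ℕ × ℕ × ℕ} (h : tableStep T S) :
    margin₁ T ≤ margin₁ S ∧ margin₂ T ≤ margin₂ S := by
  rcases h with ⟨x, y, z, t, rfl, rfl⟩ | ⟨x, y, z, t, rfl, rfl⟩ | ⟨x, y, z, t, rfl, rfl⟩ |
      ⟨x, y, z, t, rfl, rfl⟩ <;>
    · simp only [margin₁, margin₂]
      omega

lemma margin_le_of_tableLe {T S : ℕ × ℕ × ℕ × ℕ} (h : tableLe T S) :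
    margin₁ T ≤ margin₁ S ∧ margin₂ T ≤ margin₂ S := by
  induction h with
  | refl => exact ⟨le_rfl, le_rfl⟩
  | tail _ hstep ih =>
    obtain ⟨h₁, h₂⟩ := margin_le_of_tableStep hstep
    exact ⟨ih.1.trans h₁, ih.2.trans h₂⟩

lemma admissible_marginRule {P : ℤ → ℤ → Prop} [DecidableRel P] (hsymm : ∀ a b, P a b → P b a)
    (hmono : ∀ a b a' b', a ≤ a' → b ≤ b' → P a b → P a' b') : Admissible n (marginRule P) := by
  refine ⟨fun x y z t _ => if_congr ⟨hsymm _ _, hsymm _ _⟩ rfl rfl, fun T S _ _ hTS => ?_⟩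
  obtain ⟨h₁, h₂⟩ := margin_le_of_tableLe hTS
  unfold marginRule
  by_cases hT : P (margin₁ T) (margin₂ T)
  · rw [if_pos hT, if_pos (hmono _ _ _ _ h₁ h₂ hT)]
  · rw [if_neg hT]
    exact Fin.zero_le _

lemma rulePB_eq_marginRule : rulePB = marginRule (fun a b => 0 < a ∧ 0 < b) := by
  funext ⟨x, y, z, t⟩
  exact if_congr (by simp only [margin₁, margin₂]; omega) rfl rfl

lemma admissible_rulePB : Admissible n rulePB := by
  rw [rulePB_eq_marginRule]
  exact admissible_marginRule (fun _ _ h => h.symm) fun _ _ _ _ ha hb h => ⟨by omega, by omega⟩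

lemma sum_filter_le_sum_filter_of_nonpos_of_nonneg {ι M : Type*} [AddCommMonoid M]
    [PartialOrder M] [IsOrderedAddMonoid M] {s : Finset ι} {f : ι → M} {p q : ι → Prop}
    [DecidablePred p] [DecidablePred q] (hp : ∀ i ∈ s, p i → f i ≤ 0)
    (hnp : ∀ i ∈ s, ¬ p i → 0 ≤ f i) :
    ∑ i ∈ s.filter p, f i ≤ ∑ i ∈ s.filter q, f i := by
  rw [sum_filter, sum_filter]
  refine sum_le_sum fun i hi => ?_
  split_ifs with hpi hqi hqi
  · exact le_rfl
  · exact hp i hi hpi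
  · exact hnp i hi hpi
  · exact le_rfl

lemma sum_acceptSet_add_transpose {r : ℕ × ℕ × ℕ × ℕ → Fin 2}
    (hr : ∀ x y z t : ℕ, x + y + z + t = n → r (x, y, z, t) = r (x, z, y, t))
    (f : ℕ × ℕ × ℕ × ℕ → ℝ) :
    ∑ T ∈ acceptSet n r, (f T + f (transpose T)) = 2 * ∑ T ∈ acceptSet n r, f T := by
  have hmaps : ∀ T ∈ acceptSet n r, transpose T ∈ acceptSet n r := by
    rintro ⟨x, y, z, t⟩ hT
    simp only [acceptSet, mem_filter, mem_tables, tsum4_transpose] at hT ⊢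
    exact ⟨hT.1, (hr x y z t hT.1).symm.trans hT.2⟩
  rw [sum_add_distrib, sum_nbij' transpose transpose hmaps hmaps (fun _ _ => rfl) (fun _ _ => rfl)
    (fun _ _ => rfl), two_mul]

theorem loss_rulePB_le (hn : n = 2 * m + 1) (hw0 : 0 < w) (hθ : 1/2 < θ) (hθ1 : θ < 1)
    (hwθ : w ≤ θ) (hc : 2 * (1 - w) / w ≤ odds θ + odds θ ^ (-(n : ℤ)))
    {r : ℕ × ℕ × ℕ × ℕ → Fin 2}
    (hr : ∀ x y z t : ℕ, x + y + z + t = n → r (x, y, z, t) = r (x, z, y, t)) :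
    loss n w θ rulePB ≤ loss n w θ r := by
  have hθ0 : 0 < θ := by linarith
  rw [loss_le_loss_iff, ← mul_le_mul_iff_right₀ (two_pos (α := ℝ)),
    ← sum_acceptSet_add_transpose admissible_rulePB.1, ← sum_acceptSet_add_transpose hr]
  refine sum_filter_le_sum_filter_of_nonpos_of_nonneg (fun T _ hT => ?_) (fun T hT hpb => ?_)
  · rw [rulePB_eq_marginRule, marginRule_eq_one_iff] at hT
    exact add_nonpos (acceptCost_nonpos hθ hθ1 hw0.le hwθ hT.2)
      (acceptCost_nonpos hθ hθ1 hw0.le hwθ (by rw [margin₂_transpose]; exact hT.1))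
  · rw [rulePB_eq_marginRule, marginRule_eq_one_iff] at hpb
    exact acceptCost_add_acceptCost_transpose_nonneg hn hw0 hθ hθ1 hc hT hpb

def rulePBStrict : ℕ × ℕ × ℕ × ℕ → Fin 2 :=
  marginRule (fun a b => 0 < a ∧ 0 < b ∧ 2 < a + b)

lemma admissible_rulePBStrict : Admissible n rulePBStrict :=
  admissible_marginRule (fun _ _ h => ⟨h.2.1, h.1, by omega⟩)
    fun _ _ _ _ ha hb h => ⟨by omega, by omega, by omega⟩

lemma loss_rulePBStrict_lt (hn : n = 2 * m + 1) (hθ0 : 0 < θ) (hθ1 : θ < 1) (hwθ : θ < w) :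
    loss n w θ rulePBStrict < loss n w θ rulePB := by
  have hsub : acceptSet n rulePBStrict ⊆ acceptSet n rulePB := by
    intro T
    simp only [acceptSet, mem_filter, rulePB_eq_marginRule, rulePBStrict, marginRule_eq_one_iff]
    exact fun ⟨hT, ha, hb, _⟩ => ⟨hT, ha, hb⟩
  have hpos : 0 < ∑ T ∈ acceptSet n rulePB \ acceptSet n rulePBStrict, acceptCost n w θ T := by
    refine sum_pos (fun T hT => acceptCost_pos hθ0 hθ1 hwθ ?_) ⟨(1, m, m, 0), ?_⟩
    · simp only [acceptSet, mem_sdiff, mem_filter, rulePB_eq_marginRule, rulePBStrict,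
        marginRule_eq_one_iff] at hT
      obtain ⟨⟨hT, ha, hb⟩, hwide⟩ := hT
      have : ¬ 2 < margin₁ T + margin₂ T := fun h => hwide ⟨hT, ha, hb, h⟩
      omega
    · simp only [acceptSet, mem_sdiff, mem_filter, mem_tables, tsum4, rulePB_eq_marginRule,
        rulePBStrict, marginRule_eq_one_iff, margin₁, margin₂]
      omega
  linarith [loss_sub_loss_of_subset (w := w) (θ := θ) hsub]

def rulePBLenient (n : ℕ) : ℕ × ℕ × ℕ × ℕ → Fin 2 :=
  marginRule (fun a b => (0 < a ∧ 0 < b) ∨ (-1 ≤ a ∧ -1 ≤ b ∧ (n ≤ a ∨ n ≤ b)))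

lemma admissible_rulePBLenient : Admissible n (rulePBLenient n) :=
  admissible_marginRule (fun _ _ h => by omega) fun _ _ _ _ ha hb h => by omega

lemma acceptSet_rulePBLenient_sdiff (hn : n = 2 * m + 1) :
    acceptSet n (rulePBLenient n) \ acceptSet n rulePB = {(m, m + 1, 0, 0), (m, 0, m + 1, 0)} := by
  ext ⟨x, y, z, t⟩
  simp only [acceptSet, mem_sdiff, mem_filter, mem_tables, tsum4, rulePB_eq_marginRule,
    rulePBLenient, marginRule_eq_one_iff, margin₁, margin₂, mem_insert, mem_singleton,
    Prod.mk.injEq]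
  omega

lemma loss_rulePBLenient_lt (hn : n = 2 * m + 1) (hw0 : 0 < w) (hθ0 : 0 < θ) (hθ1 : θ < 1)
    (hc : odds θ + odds θ ^ (-(n : ℤ)) < 2 * (1 - w) / w) :
    loss n w θ (rulePBLenient n) < loss n w θ rulePB := by
  have hsub : acceptSet n rulePB ⊆ acceptSet n (rulePBLenient n) := by
    intro T
    simp only [acceptSet, mem_filter, rulePB_eq_marginRule, rulePBLenient, marginRule_eq_one_iff]
    exact fun ⟨hT, h⟩ => ⟨hT, Or.inl h⟩
  have hmargins : margin₁ (m, m + 1, 0, 0) = n ∧ margin₂ (m, m + 1, 0, 0) = -1 := by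
    simp only [margin₁, margin₂]
    omega
  have hneg : acceptCost n w θ (m, m + 1, 0, 0)
      + acceptCost n w θ (transpose (m, m + 1, 0, 0)) < 0 := by
    rw [acceptCost_add_acceptCost_transpose hθ0 hθ1, hmargins.1, hmargins.2, neg_neg, zpow_one]
    refine mul_neg_of_pos_of_neg (mul_pos (mcoef_pos _) (fnWeight_pos hθ0 hθ1 _)) ?_
    rw [lt_div_iff₀' hw0] at hc
    linarith
  have hdiff := loss_sub_loss_of_subset (w := w) (θ := θ) hsub
  rw [acceptSet_rulePBLenient_sdiff hn, sum_pair (by simp)] at hdiff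
  change _ = _ + acceptCost n w θ (transpose (m, m + 1, 0, 0)) at hdiff
  linarith

end PremissBased

open PremissBased

theorem premissBased_optimal_iff_general
    (n m : ℕ) (hn : n = 2 * m + 1)
    (w : ℝ) (hw0 : 0 < w)
    (θ : ℝ) (hθ : 1/2 < θ) (hθ1 : θ < 1) :
    (∀ r : ℕ × ℕ × ℕ × ℕ → Fin 2, Admissible n r →
        loss n w θ rulePB ≤ loss n w θ r) ↔
    (w ≤ θ ∧ 2 * (1 - w) / w ≤ θ / (1 - θ) + (θ / (1 - θ)) ^ (-(n : ℤ))) := by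
  have hθ0 : 0 < θ := by linarith
  constructor
  · intro hopt
    refine ⟨not_lt.1 fun hwθ => ?_, not_lt.1 fun hc => ?_⟩
    · exact (hopt _ admissible_rulePBStrict).not_gt (loss_rulePBStrict_lt hn hθ0 hθ1 hwθ)
    · exact (hopt _ admissible_rulePBLenient).not_gt (loss_rulePBLenient_lt hn hw0 hθ0 hθ1 hc)
  · rintro ⟨hwθ, hc⟩ r hr
    exact loss_rulePB_le hn hw0 hθ hθ1 hwθ hc hr.1

/-- The premiss-based rule is optimal if and only if `θ ≥ w` and
`θ/(1−θ) + (θ/(1−θ))^{−n} ≥ 2(1−w)/w`. -/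
theorem premissBased_optimal_iff
    (n m : ℕ) (hm : 1 ≤ m) (hn : n = 2 * m + 1)
    (w : ℝ) (hw0 : 0 < w) (hw1 : w < 1)
    (θ : ℝ) (hθ : 1/2 < θ) (hθ1 : θ < 1) :
    (∀ r : ℕ × ℕ × ℕ × ℕ → Fin 2, Admissible n r →
        loss n w θ rulePB ≤ loss n w θ r) ↔
    (w ≤ θ ∧ 2 * (1 - w) / w ≤ θ / (1 - θ) + (θ / (1 - θ)) ^ (-(n : ℤ))) :=
  premissBased_optimal_iff_general n m hn w hw0 θ hθ hθ1
end
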